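/- arXiv:2206.14376 — 4 statements merged into one kernel-verified Lean document; each statement's English description precedes it below -/
import Mathlib

section
/- For every 7-uniform hypergraph H with vertex set V and edge set E, the transversal number satisfies 96050·τ(H) ≤ 11093·n₁ + 17131·n₂ + 18250·n₃ + 18400·n₍≥4₎ + 18400·|E|, where nᵢ is the number of vertices of degree i and n₍≥4₎ is the number of vertices of degree at least 4. -/
/-
Greedy argument with a potential. Put `Φ(E) = 18400·|E| + Σ_v w(deg v)`, where `w` is the concave
weight `0, 11093, 14798, 16170, 16422, 16422, …`. Deleting a vertex `v` of maximum degree `d`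
together with its `d` edges costs one vertex of the transversal and lowers `Φ` by at least
`18400·d + w(d) + 6d·(w(d) - w(d-1))` ≥ 96050: each of the `6d` incidences of the deleted edges
outside `v` lowers the degree of a vertex of degree at most `d`, which by concavity of `w` costs at
least the last increment `w(d) - w(d-1)`. Finally `w` lies below the weights of the statement.
-/

variable {α : Type*} [DecidableEq α]

/-- A transversal of an edge set: meets every edge. -/
def IsTransversal (E : Finset (Finset α)) (T : Finset α) : Prop :=
  ∀ e ∈ E, (e ∩ T).Nonempty

/-- Transversal number: minimum cardinality of a transversal. -/
noncomputable def tau (E : Finset (Finset α)) : ℕ :=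
  sInf {n | ∃ T : Finset α, T.card = n ∧ IsTransversal E T}

/-- Degree of a vertex: number of edges containing it. -/
def degree (E : Finset (Finset α)) (v : α) : ℕ :=
  (E.filter (fun e => v ∈ e)).card

/-- Neighborhood of a vertex. -/
def nbhd (E : Finset (Finset α)) (v : α) : Finset α :=
  ((E.filter (fun e => v ∈ e)).biUnion id).erase v

variable {E : Finset (Finset α)} {T V : Finset α}

theorem IsTransversal.mono {F : Finset (Finset α)} (hEF : E ⊆ F) (hT : IsTransversal F T) :
    IsTransversal E T :=
  fun e he => hT e (hEF he)

theorem tau_le_card (hT : IsTransversal E T) : tau E ≤ T.card :=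
  Nat.sInf_le ⟨T, rfl, hT⟩

theorem tau_empty : tau (∅ : Finset (Finset α)) = 0 :=
  Nat.eq_zero_of_le_zero (tau_le_card (T := ∅) fun e he => absurd he (Finset.notMem_empty e))

theorem exists_transversal_card_eq_tau (h : ∃ T, IsTransversal E T) :
    ∃ T, T.card = tau E ∧ IsTransversal E T :=
  let ⟨T, hT⟩ := h
  Nat.sInf_mem (s := {n | ∃ T : Finset α, T.card = n ∧ IsTransversal E T})
    ⟨T.card, T, rfl, hT⟩

theorem tau_le_tau_filter_notMem_add_one (E : Finset (Finset α)) (v : α) :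
    tau E ≤ tau (E.filter (v ∉ ·)) + 1 := by
  by_cases h : ∃ T, IsTransversal (E.filter (v ∉ ·)) T
  · obtain ⟨T, hcard, hT⟩ := exists_transversal_card_eq_tau h
    have hvT : IsTransversal E (insert v T) := by
      intro e he
      by_cases hve : v ∈ e
      · exact ⟨v, Finset.mem_inter.mpr ⟨hve, Finset.mem_insert_self v T⟩⟩
      · obtain ⟨x, hx⟩ := hT e (Finset.mem_filter.mpr ⟨he, hve⟩)
        exact ⟨x, Finset.inter_subset_inter_left (Finset.subset_insert v T) hx⟩
    calc tau E ≤ (insert v T).card := tau_le_card hvT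
      _ ≤ T.card + 1 := Finset.card_insert_le v T
      _ = tau (E.filter (v ∉ ·)) + 1 := by rw [hcard]
  · -- then `E` has no transversal either, and `tau E` is the junk value `sInf ∅ = 0`
    have hnone : {n | ∃ T : Finset α, T.card = n ∧ IsTransversal E T} = ∅ :=
      Set.eq_empty_of_forall_notMem fun _ hn =>
        hn.elim fun T hT => h ⟨T, hT.2.mono (Finset.filter_subset _ E)⟩
    rw [tau, hnone, Nat.sInf_empty]
    exact Nat.zero_le _

theorem degree_filter_add_degree_filter_not (E : Finset (Finset α)) (p : Finset α → Prop)
    [DecidablePred p] (u : α) :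
    degree (E.filter p) u + degree (E.filter (¬p ·)) u = degree E u := by
  rw [degree, degree, degree, Finset.filter_comm (p := p), Finset.filter_comm (p := (¬p ·))]
  exact Finset.card_filter_add_card_filter_not p

theorem sum_degree_eq_sum_card (hVE : ∀ e ∈ E, e ⊆ V) :
    ∑ u ∈ V, degree E u = ∑ e ∈ E, e.card := by
  calc ∑ u ∈ V, degree E u = ∑ e ∈ E, (V ∩ e).card := by
        simp_rw [degree, ← Finset.filter_mem_eq_inter, Finset.card_eq_sum_ones, Finset.sum_filter]
        exact Finset.sum_comm
    _ = ∑ e ∈ E, e.card :=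
        Finset.sum_congr rfl fun e he => by rw [Finset.inter_eq_right.mpr (hVE e he)]

theorem sum_degree_erase_of_forall_mem {v : α} (hVE : ∀ e ∈ E, e ⊆ V) (hv : v ∈ V)
    (hvE : ∀ e ∈ E, v ∈ e) {k : ℕ} (huniform : ∀ e ∈ E, e.card = k + 1) :
    ∑ u ∈ V.erase v, degree E u = k * E.card := by
  have hdeg : degree E v = E.card := congrArg Finset.card (Finset.filter_true_of_mem hvE)
  have htotal := sum_degree_eq_sum_card hVE
  rw [← Finset.add_sum_erase V _ hv, hdeg, Finset.sum_congr rfl huniform, Finset.sum_const,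
    smul_eq_mul] at htotal
  rw [Nat.mul_comm]
  linarith

def vertexWeight : ℕ → ℕ
  | 0 => 0
  | 1 => 11093
  | 2 => 14798
  | 3 => 16170
  | _ + 4 => 16422

theorem vertexWeight_add_four (n : ℕ) : vertexWeight (n + 4) = 16422 := rfl

theorem vertexWeight_mono : Monotone vertexWeight := by
  refine monotone_nat_of_le_succ fun n => ?_
  rcases n with _ | _ | _ | _ | n
  all_goals first | decide | exact le_rfl

theorem vertexWeight_sub_add_le {d j i : ℕ} (hjd : j ≤ d) (hij : i ≤ j) :
    vertexWeight (j - i) + i * (vertexWeight d - vertexWeight (d - 1)) ≤ vertexWeight j := by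
  by_cases hd : d ≤ 4
  · have hsmall : ∀ d ≤ 4, ∀ j ≤ d, ∀ i ≤ j,
        vertexWeight (j - i) + i * (vertexWeight d - vertexWeight (d - 1)) ≤ vertexWeight j := by
      decide
    exact hsmall d hd j hjd i hij
  · obtain ⟨k, rfl⟩ : ∃ k, d = k + 5 := ⟨d - 5, by omega⟩
    have hflat : vertexWeight (k + 5) = vertexWeight (k + 5 - 1) := rfl
    rw [hflat, Nat.sub_self, Nat.mul_zero, Nat.add_zero]
    exact vertexWeight_mono (Nat.sub_le j i)

theorem le_potential_drop {d : ℕ} (hd : 1 ≤ d) :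
    96050 ≤ 18400 * d + vertexWeight d + 6 * d * (vertexWeight d - vertexWeight (d - 1)) := by
  by_cases hd4 : d ≤ 4
  · interval_cases d <;> decide
  · obtain ⟨k, rfl⟩ : ∃ k, d = k + 4 := ⟨d - 4, by omega⟩
    rw [vertexWeight_add_four]
    omega

def potential (V : Finset α) (E : Finset (Finset α)) : ℕ :=
  18400 * E.card + ∑ u ∈ V, vertexWeight (degree E u)

theorem potential_filter_notMem_add_le {v : α} (hVE : ∀ e ∈ E, e ⊆ V)
    (huniform : ∀ e ∈ E, e.card = 7) (hv : v ∈ V)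
    (hmax : ∀ u ∈ V, degree E u ≤ degree E v) (hd : 1 ≤ degree E v) :
    96050 + potential V (E.filter (v ∉ ·)) ≤ potential V E := by
  obtain ⟨d, hdv⟩ : ∃ d, degree E v = d := ⟨_, rfl⟩
  rw [hdv] at hmax hd
  set R := E.filter (v ∈ ·)
  set E' := E.filter (v ∉ ·)
  have hsplit (u : α) : degree R u + degree E' u = degree E u :=
    degree_filter_add_degree_filter_not E (v ∈ ·) u
  have hR : R.card = d := hdv
  have hcard : R.card + E'.card = E.card := Finset.card_filter_add_card_filter_not _
  have hE'v : degree E' v = 0 := by simp [degree, E']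
  have hincidences : ∑ u ∈ V.erase v, degree R u = 6 * d :=
    hR ▸ sum_degree_erase_of_forall_mem (fun e he => hVE e (Finset.mem_of_mem_filter e he)) hv
      (fun e he => (Finset.mem_filter.mp he).2)
      (fun e he => huniform e (Finset.mem_of_mem_filter e he))
  have hlocal : ∀ u ∈ V.erase v, vertexWeight (degree E' u) +
      degree R u * (vertexWeight d - vertexWeight (d - 1)) ≤ vertexWeight (degree E u) := by
    intro u hu
    have := vertexWeight_sub_add_le (hmax u (Finset.mem_of_mem_erase hu))
      (Nat.le.intro (hsplit u))
    rwa [← hsplit u, Nat.add_sub_cancel_left, hsplit u] at this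
  have hrest := Finset.sum_le_sum hlocal
  rw [Finset.sum_add_distrib, ← Finset.sum_mul, hincidences] at hrest
  have hdrop := le_potential_drop hd
  rw [potential, potential, ← hcard, hR, ← Finset.add_sum_erase V _ hv,
    ← Finset.add_sum_erase V _ hv, hE'v, hdv, show vertexWeight 0 = 0 from rfl, zero_add]
  linarith

theorem mul_tau_le_potential (hVE : ∀ e ∈ E, e ⊆ V) (huniform : ∀ e ∈ E, e.card = 7) :
    96050 * tau E ≤ potential V E := by
  induction E using Finset.strongInduction with
  | H E ih =>
  obtain rfl | ⟨e₀, he₀⟩ := E.eq_empty_or_nonempty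
  · simp [tau_empty]
  obtain ⟨x, hx⟩ : e₀.Nonempty := Finset.card_pos.mp (by rw [huniform e₀ he₀]; norm_num)
  have hxV : x ∈ V := hVE e₀ he₀ hx
  obtain ⟨v, hv, hmax⟩ := V.exists_max_image (degree E) ⟨x, hxV⟩
  have hd : 1 ≤ degree E v :=
    (Finset.card_pos.mpr ⟨e₀, Finset.mem_filter.mpr ⟨he₀, hx⟩⟩).trans_le (hmax x hxV)
  have hE' : E.filter (v ∉ ·) ⊂ E := by
    obtain ⟨e, he⟩ := Finset.card_pos.mp hd
    obtain ⟨heE, hve⟩ := Finset.mem_filter.mp he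
    exact Finset.filter_ssubset.mpr ⟨e, heE, not_not_intro hve⟩
  have hsmaller := ih _ hE' (fun e he => hVE e (Finset.mem_of_mem_filter e he))
    (fun e he => huniform e (Finset.mem_of_mem_filter e he))
  calc 96050 * tau E ≤ 96050 * (tau (E.filter (v ∉ ·)) + 1) :=
        Nat.mul_le_mul_left _ (tau_le_tau_filter_notMem_add_one E v)
    _ ≤ 96050 + potential V (E.filter (v ∉ ·)) := by omega
    _ ≤ potential V E := potential_filter_notMem_add_le hVE huniform hv hmax hd

theorem sum_vertexWeight_le {β : Type*} (V : Finset β) (f : β → ℕ) :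
    ∑ u ∈ V, vertexWeight (f u) ≤
      11093 * (V.filter (fun v => f v = 1)).card +
      17131 * (V.filter (fun v => f v = 2)).card +
      18250 * (V.filter (fun v => f v = 3)).card +
      18400 * (V.filter (fun v => 4 ≤ f v)).card := by
  have hpoint (n : ℕ) : vertexWeight n ≤ (if n = 1 then 11093 else 0) +
      (if n = 2 then 17131 else 0) + (if n = 3 then 18250 else 0) +
      (if 4 ≤ n then 18400 else 0) := by
    rcases n with _ | _ | _ | _ | n
    all_goals simp [vertexWeight]
  calc ∑ u ∈ V, vertexWeight (f u) ≤ _ := Finset.sum_le_sum fun u _ => hpoint (f u)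
    _ = _ := by
      simp only [Finset.sum_add_distrib, ← Finset.sum_filter, Finset.sum_const, smul_eq_mul]
      ring

theorem stmt_0 (V : Finset α) (E : Finset (Finset α))
    (hVE : ∀ e ∈ E, e ⊆ V) (huniform : ∀ e ∈ E, e.card = 7) :
    96050 * tau E ≤
      11093 * (V.filter (fun v => degree E v = 1)).card +
      17131 * (V.filter (fun v => degree E v = 2)).card +
      18250 * (V.filter (fun v => degree E v = 3)).card +
      18400 * (V.filter (fun v => 4 ≤ degree E v)).card +
      18400 * E.card := by
  have hweights := sum_vertexWeight_le V (degree E)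
  have hpotential := mul_tau_le_potential hVE huniform
  rw [potential] at hpotential
  omega
end

section
/- For every k ≥ 1 there exists a k-uniform hypergraph H with τ(H) = 2 and n + m = k + 1 + ⌊√k⌋ + ⌈k/⌊√k⌋⌉, where n and m are the numbers of vertices and edges. Consequently, the Tuza constant satisfies c_k ≥ 2/(k + 1 + ⌊√k⌋ + ⌈k/⌊√k⌋⌉). -/
variable {α : Type*} [DecidableEq α]

/-!
Take a core edge `A = {0, …, k-1}`, cover it by `t = ⌈k/s⌉` intervals `O` of length `s`, and for
each such `O` add the edge obtained from `A` by swapping `O` for a fresh `s`-set `B`. Any vertex of `A`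
together with any vertex of `B` is a transversal, while no single vertex is: it would have to lie in
`A`, and the edge whose swapped-out interval contains it misses it. Thus `τ = 2` with
`n + m = (k + s) + (1 + t)`; take `s = ⌊√k⌋`.
-/

open Finset

theorem tau_eq_card_of_isTransversal {E : Finset (Finset α)} {T : Finset α}
    (hT : IsTransversal E T) (hmin : ∀ T', IsTransversal E T' → T.card ≤ T'.card) :
    tau E = T.card :=
  le_antisymm (Nat.sInf_le ⟨T, rfl, hT⟩)
    (le_csInf ⟨_, T, rfl, hT⟩ (by rintro n ⟨T', rfl, hT'⟩; exact hmin T' hT'))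

def swapHypergraph (A B : Finset α) (F : Finset (Finset α)) : Finset (Finset α) :=
  insert A (F.image fun O => B ∪ (A \ O))

section swapHypergraph

variable {A B : Finset α} {F : Finset (Finset α)}

theorem subset_union_of_mem_swapHypergraph {e : Finset α} (he : e ∈ swapHypergraph A B F) :
    e ⊆ A ∪ B := by
  rcases mem_insert.mp he with rfl | he
  · exact subset_union_left
  · obtain ⟨O, -, rfl⟩ := mem_image.mp he
    exact union_subset subset_union_right (sdiff_subset.trans subset_union_left)

theorem card_of_mem_swapHypergraph (hAB : Disjoint A B)
    (hF : ∀ O ∈ F, O ⊆ A ∧ O.card = B.card) {e : Finset α} (he : e ∈ swapHypergraph A B F) :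
    e.card = A.card := by
  rcases mem_insert.mp he with rfl | he
  · rfl
  · obtain ⟨O, hO, rfl⟩ := mem_image.mp he
    obtain ⟨hOA, hOB⟩ := hF O hO
    rw [card_union_of_disjoint (hAB.symm.mono_right sdiff_subset), card_sdiff_of_subset hOA,
      hOB, Nat.add_sub_cancel' (hOB ▸ card_le_card hOA)]

theorem card_swapHypergraph (hAB : Disjoint A B) (hB : B.Nonempty) (hF : ∀ O ∈ F, O ⊆ A) :
    (swapHypergraph A B F).card = F.card + 1 := by
  obtain ⟨b, hb⟩ := hB
  have hbA : b ∉ A := disjoint_right.mp hAB hb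
  have hA : A ∉ F.image fun O => B ∪ (A \ O) := by
    intro h
    obtain ⟨O, -, hO⟩ := mem_image.mp h
    exact hbA (hO ▸ mem_union_left _ hb)
  have hinj : Set.InjOn (fun O => B ∪ (A \ O)) F := by
    intro O hO O' hO' h
    have recover : ∀ P ⊆ A, A \ (B ∪ (A \ P)) = P := fun P hP => by
      rw [sdiff_union_distrib, hAB.sdiff_eq_left, Finset.sdiff_sdiff_eq_self hP,
        inter_eq_right.mpr hP]
    rw [← recover O (hF O hO), ← recover O' (hF O' hO')]
    exact congrArg (A \ ·) h
  rw [swapHypergraph, card_insert_of_notMem hA, card_image_of_injOn hinj]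

theorem tau_swapHypergraph (hAB : Disjoint A B) (hA : A.Nonempty) (hB : B.Nonempty)
    (hcover : ∀ v ∈ A, ∃ O ∈ F, v ∈ O) : tau (swapHypergraph A B F) = 2 := by
  obtain ⟨a, ha⟩ := hA
  obtain ⟨b, hb⟩ := hB
  have hab : a ≠ b := fun h => disjoint_left.mp hAB ha (h ▸ hb)
  have htrans : IsTransversal (swapHypergraph A B F) {a, b} := by
    intro e he
    rcases mem_insert.mp he with rfl | he
    · exact ⟨a, by simp [ha]⟩
    · obtain ⟨O, -, rfl⟩ := mem_image.mp he
      exact ⟨b, by simp [hb]⟩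
  rw [← card_pair hab]
  refine tau_eq_card_of_isTransversal htrans fun T hT => ?_
  rw [card_pair hab, Nat.succ_le_iff, one_lt_card]
  obtain ⟨v, hv⟩ := hT A (mem_insert_self _ _)
  obtain ⟨hvA, hvT⟩ := mem_inter.mp hv
  obtain ⟨O, hO, hvO⟩ := hcover v hvA
  obtain ⟨w, hw⟩ := hT _ (mem_insert_of_mem (mem_image_of_mem _ hO))
  obtain ⟨hwe, hwT⟩ := mem_inter.mp hw
  refine ⟨v, hvT, w, hwT, ?_⟩
  rintro rfl
  rcases mem_union.mp hwe with hvB | hv'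
  · exact disjoint_left.mp hAB hvA hvB
  · exact (mem_sdiff.mp hv').2 hvO

end swapHypergraph

theorem le_mul_card_of_covers {A : Finset α} {F : Finset (Finset α)} {s : ℕ}
    (hF : ∀ O ∈ F, O.card ≤ s) (hcover : ∀ v ∈ A, ∃ O ∈ F, v ∈ O) :
    A.card ≤ F.card * s :=
  calc A.card ≤ (F.biUnion id).card :=
        card_le_card fun v hv => mem_biUnion.mpr (hcover v hv)
    _ ≤ F.card * s := card_biUnion_le_card_mul _ _ _ hF

theorem exists_interval_cover {k s : ℕ} (hs : 0 < s) (hsk : s ≤ k) :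
    ∃ F : Finset (Finset ℕ), (∀ O ∈ F, O ⊆ range k ∧ O.card = s) ∧
      (∀ v ∈ range k, ∃ O ∈ F, v ∈ O) ∧ F.card = (k + s - 1) / s := by
  -- the `i`-th interval starts at `i * s`, pulled back to end at `k` if it would overshoot
  let block : ℕ → Finset ℕ := fun i => Ico (min (i * s) (k - s)) (min (i * s) (k - s) + s)
  have hblock : ∀ O ∈ (range ((k + s - 1) / s)).image block, O ⊆ range k ∧ O.card = s := by
    intro O hO
    obtain ⟨i, -, rfl⟩ := mem_image.mp hO
    exact ⟨fun v hv => by simp only [block, mem_Ico, mem_range] at hv ⊢; omega, by simp [block]⟩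
  have hcover : ∀ v ∈ range k, ∃ O ∈ (range ((k + s - 1) / s)).image block, v ∈ O := by
    intro v hv
    have := mem_range.mp hv
    have := Nat.div_mul_le_self v s
    have := Nat.lt_div_mul_add (a := v) hs
    have hvt : v / s < (k + s - 1) / s := by rw [Nat.lt_div_iff_mul_lt hs]; omega
    refine ⟨block (v / s), mem_image_of_mem _ (mem_range.mpr hvt), ?_⟩
    simp only [block, mem_Ico]
    omega
  refine ⟨_, hblock, hcover, le_antisymm (card_image_le.trans (card_range _).le) ?_⟩
  -- the intervals are pairwise distinct, since covering `k` points by `s`-sets takes `⌈k/s⌉` sets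
  have hk := le_mul_card_of_covers (fun O hO => (hblock O hO).2.le) hcover
  rw [card_range] at hk
  rw [Nat.div_le_iff_le_mul_add_pred hs, mul_comm]
  omega

theorem stmt_11 (k : ℕ) (hk : 1 ≤ k) :
    ∃ (V : Finset ℕ) (E : Finset (Finset ℕ)),
      (∀ e ∈ E, e ⊆ V) ∧ (∀ e ∈ E, e.card = k) ∧
      tau E = 2 ∧
      V.card + E.card =
        k + 1 + Nat.sqrt k + (k + Nat.sqrt k - 1) / Nat.sqrt k := by
  set s := Nat.sqrt k
  have hs : 0 < s := Nat.sqrt_pos.mpr hk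
  obtain ⟨F, hF, hcover, hFcard⟩ := exists_interval_cover hs (Nat.sqrt_le_self k)
  have hAB : Disjoint (range k) (Ico k (k + s)) :=
    disjoint_left.mpr fun v hv hv' => by simp only [mem_range, mem_Ico] at hv hv'; omega
  have hB : (Ico k (k + s)).Nonempty := nonempty_Ico.mpr (by omega)
  refine ⟨range k ∪ Ico k (k + s), swapHypergraph (range k) (Ico k (k + s)) F,
    fun e he => subset_union_of_mem_swapHypergraph he,
    fun e he => ?_, tau_swapHypergraph hAB (nonempty_range_iff.mpr (by omega)) hB hcover, ?_⟩
  · rw [card_of_mem_swapHypergraph hAB (fun O hO => by simpa using hF O hO) he, card_range]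
  · rw [card_union_of_disjoint hAB, card_swapHypergraph hAB hB fun O hO => (hF O hO).1, hFcard]
    simp only [card_range, Nat.card_Ico]
    omega
end

section
/- There exists a 7-uniform hypergraph H with n vertices and m edges such that τ(H)/(n+m) = 3/20, i.e., τ(H)/(n+m) = 3/(2·7+6). Consequently c₇ ≥ 0.15. -/
/-!
Take seven 7-subsets of a 13-point set such that every pair of points misses some edge.
Then no two points form a transversal, while three well-chosen points do, so
τ = 3 and τ / (n + m) = 3 / (13 + 7) = 3 / 20.
-/

variable {α : Type*} [DecidableEq α]

section Transversal

variable {E : Finset (Finset α)} {V T : Finset α} {k : ℕ}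

theorem tau_eq_of_isTransversal (hT : IsTransversal E T) (hk : T.card = k)
    (hmin : ∀ T', IsTransversal E T' → k ≤ T'.card) : tau E = k :=
  le_antisymm (Nat.sInf_le ⟨T, hk, hT⟩)
    (le_csInf ⟨k, T, hk, hT⟩ (by rintro _ ⟨T', rfl, hT'⟩; exact hmin T' hT'))

theorem IsTransversal.lt_card (hsub : ∀ e ∈ E, e ⊆ V) (hkV : k ≤ V.card)
    (havoid : ∀ S ∈ V.powersetCard k, ∃ e ∈ E, Disjoint e S) (hT : IsTransversal E T) :
    k < T.card := by
  by_contra! hTk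
  obtain ⟨S, hTS, hSV, hS⟩ :=
    Finset.exists_subsuperset_card_eq (Finset.inter_subset_right : T ∩ V ⊆ V)
      ((Finset.card_le_card Finset.inter_subset_left).trans hTk) hkV
  obtain ⟨e, he, hdisj⟩ := havoid S (Finset.mem_powersetCard.mpr ⟨hSV, hS⟩)
  obtain ⟨x, hx⟩ := hT e he
  rw [Finset.mem_inter] at hx
  exact Finset.disjoint_left.mp hdisj hx.1 (hTS (Finset.mem_inter.mpr ⟨hx.2, hsub e he hx.1⟩))

end Transversal

def V₀ : Finset ℕ := Finset.range 13

def E₀ : Finset (Finset ℕ) :=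
  { {2, 5, 6, 7, 10, 11, 12}, {1, 2, 3, 4, 5, 8, 9}, {0, 3, 4, 6, 7, 9, 10},
    {0, 1, 7, 8, 9, 11, 12}, {0, 1, 2, 5, 6, 8, 10}, {0, 2, 3, 4, 5, 11, 12},
    {1, 3, 4, 6, 8, 11, 12} }

theorem E₀_subset : ∀ e ∈ E₀, e ⊆ V₀ := by decide

theorem E₀_card_eq : ∀ e ∈ E₀, e.card = 7 := by decide

theorem E₀_avoids_pairs : ∀ S ∈ V₀.powersetCard 2, ∃ e ∈ E₀, Disjoint e S := by decide

theorem tau_E₀ : tau E₀ = 3 :=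
  tau_eq_of_isTransversal (T := {0, 1, 2}) (by unfold IsTransversal; decide) rfl
    fun _ hT => hT.lt_card E₀_subset (by decide) E₀_avoids_pairs

theorem stmt_12 :
    ∃ (V : Finset ℕ) (E : Finset (Finset ℕ)),
      (∀ e ∈ E, e ⊆ V) ∧ (∀ e ∈ E, e.card = 7) ∧
      (tau E : ℚ) / (V.card + E.card) = 3 / 20 := by
  refine ⟨V₀, E₀, E₀_subset, E₀_card_eq, ?_⟩
  rw [tau_E₀, show V₀.card = 13 from rfl, show E₀.card = 7 by decide]
  norm_num
end

section
/- For every k ≥ 2, there exists a k-uniform hypergraph H with n vertices and m edges such that τ(H)/(n+m) ≥ 3/(2k+6); hence c_k ≥ 3/(2k+6). -/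
variable {α : Type*} [DecidableEq α]

/-!
Six `k`-subsets of a `2k`-set such that no two points meet all six give `τ ≥ 3` with
`n + m ≤ 2k + 6`. A vertex is described by the set of edges through it, a set of edges of `K₄`
when the six edges are labelled by the pairs of `{0, 1, 2, 3}`; no two points meet all edges as
soon as no two of these sets are complementary. For `k = 2s` take four pieces of `s` points and
all unions of two pieces: every vertex type is a star of `K₄`, and the complement of a star is a
triangle. For `k = 2s + 1` the types are stars and three Hamiltonian paths of `K₄`, no two of
them complementary.
-/

open Finset

section Transversal

variable {E : Finset (Finset α)}

theorem isTransversal_biUnion (hE : ∀ e ∈ E, e.Nonempty) : IsTransversal E (E.biUnion id) :=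
  fun e he => by
    obtain ⟨v, hv⟩ := hE e he
    exact ⟨v, mem_inter.2 ⟨hv, mem_biUnion.2 ⟨e, he, hv⟩⟩⟩

theorem le_tau {n : ℕ} (hT : ∃ T, IsTransversal E T)
    (h : ∀ T, IsTransversal E T → n ≤ T.card) : n ≤ tau E := by
  obtain ⟨T, hT⟩ := hT
  exact le_csInf ⟨_, T, rfl, hT⟩ (by rintro _ ⟨T, rfl, hT⟩; exact h T hT)

theorem IsTransversal.three_le_card {T : Finset α} (hT : IsTransversal E T) (hE : E.Nonempty)
    (havoid : ∀ a b, ∃ e ∈ E, a ∉ e ∧ b ∉ e) : 3 ≤ T.card := by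
  have meet (e) (he : e ∈ E) : ∃ v ∈ T, v ∈ e := by
    obtain ⟨v, hv⟩ := hT e he
    exact ⟨v, (mem_inter.1 hv).2, (mem_inter.1 hv).1⟩
  obtain ⟨e₀, he₀⟩ := hE
  obtain ⟨a, haT, -⟩ := meet e₀ he₀
  obtain ⟨e₁, he₁, hae₁, -⟩ := havoid a a
  obtain ⟨b, hbT, hbe₁⟩ := meet e₁ he₁
  obtain ⟨e₂, he₂, hae₂, hbe₂⟩ := havoid a b
  obtain ⟨c, hcT, hce₂⟩ := meet e₂ he₂
  exact two_lt_card.2 ⟨a, haT, b, hbT, c, hcT, by grind, by grind, by grind⟩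

theorem three_le_tau (hne : ∀ e ∈ E, e.Nonempty) (hE : E.Nonempty)
    (havoid : ∀ a b, ∃ e ∈ E, a ∉ e ∧ b ∉ e) : 3 ≤ tau E :=
  le_tau ⟨_, isTransversal_biUnion hne⟩ fun _ hT => hT.three_le_card hE havoid

end Transversal

def piece (s j : ℕ) : Finset ℕ := Ico (j * s) (j * s + s)

@[simp]
theorem mem_piece {s j v : ℕ} : v ∈ piece s j ↔ j * s ≤ v ∧ v < j * s + s := mem_Ico

theorem card_piece (s j : ℕ) : (piece s j).card = s := by simp [piece]

theorem disjoint_piece {s i j : ℕ} (h : i ≠ j) : Disjoint (piece s i) (piece s j) := by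
  refine disjoint_left.2 fun v hi hj => ?_
  rw [mem_piece] at hi hj
  rcases Nat.lt_or_gt_of_ne h with h | h <;> nlinarith

theorem card_piece_union_piece {s i j : ℕ} (h : i ≠ j) :
    (piece s i ∪ piece s j).card = 2 * s := by
  rw [card_union_of_disjoint (disjoint_piece h), card_piece, card_piece, two_mul]

def evenEdges (s : ℕ) : Fin 6 → Finset ℕ :=
  ![piece s 0 ∪ piece s 1, piece s 0 ∪ piece s 2, piece s 0 ∪ piece s 3,
    piece s 1 ∪ piece s 2, piece s 1 ∪ piece s 3, piece s 2 ∪ piece s 3]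

/- The last point `4 * s - 1` of piece `3` leaves edge `23`, so that its edges `02, 03, 13` form
a path, and the new points `4 * s`, `4 * s + 1` get the paths `01, 13, 23` and `12, 03, 23`. -/
def oddEdges (s : ℕ) : Fin 6 → Finset ℕ :=
  ![insert (4 * s) (evenEdges s 0), insert (4 * s - 1) (evenEdges s 1),
    insert (4 * s + 1) (evenEdges s 2), insert (4 * s + 1) (evenEdges s 3),
    insert (4 * s) (evenEdges s 4),
    insert (4 * s) (insert (4 * s + 1) ((evenEdges s 5).erase (4 * s - 1)))]

theorem evenEdges_subset (s : ℕ) (i : Fin 6) : evenEdges s i ⊆ range (4 * s) := by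
  intro v hv
  fin_cases i <;>
    simp only [evenEdges, Fin.reduceFinMk, Matrix.cons_val, mem_union, mem_piece,
      mem_range] at hv ⊢ <;>
    omega

theorem card_evenEdges (s : ℕ) (i : Fin 6) : (evenEdges s i).card = 2 * s := by
  fin_cases i <;> exact card_piece_union_piece (by decide)

theorem evenEdges_avoid (s a b : ℕ) : ∃ i, a ∉ evenEdges s i ∧ b ∉ evenEdges s i := by
  by_contra! h
  simp only [Fin.forall_fin_succ, evenEdges, Fin.isValue, Matrix.cons_val_zero,
    Matrix.cons_val_succ, Matrix.cons_val_fin_one, forall_const, mem_union, mem_piece] at h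
  omega

theorem oddEdges_subset (s : ℕ) (i : Fin 6) : oddEdges s i ⊆ range (4 * s + 2) := by
  intro v hv
  fin_cases i <;>
    simp only [oddEdges, evenEdges, Fin.reduceFinMk, Matrix.cons_val, Fin.isValue, mem_insert,
      mem_erase, mem_union, mem_piece, mem_range] at hv ⊢ <;>
    omega

theorem card_oddEdges {s : ℕ} (hs : 0 < s) (i : Fin 6) : (oddEdges s i).card = 2 * s + 1 := by
  fin_cases i <;> simp only [oddEdges, Fin.reduceFinMk, Matrix.cons_val, Fin.isValue]
  all_goals
    repeat rw [card_insert_of_notMem (by simp [evenEdges]; omega)]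
    try rw [card_erase_of_mem (by simp [evenEdges]; omega)]
    rw [card_evenEdges]
  omega

theorem oddEdges_avoid {s : ℕ} (hs : 0 < s) (a b : ℕ) :
    ∃ i, a ∉ oddEdges s i ∧ b ∉ oddEdges s i := by
  by_contra! h
  simp only [Fin.forall_fin_succ, oddEdges, evenEdges, Fin.isValue, Matrix.cons_val_zero,
    Matrix.cons_val_one, Matrix.cons_val, Matrix.cons_val_succ, Matrix.cons_val_fin_one,
    forall_const, mem_insert, mem_erase, mem_union, mem_piece] at h
  omega

theorem exists_uniform_edges_avoiding_pairs {k : ℕ} (hk : 2 ≤ k) :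
    ∃ e : Fin 6 → Finset ℕ, (∀ i, e i ⊆ range (2 * k)) ∧ (∀ i, (e i).card = k) ∧
      ∀ a b, ∃ i, a ∉ e i ∧ b ∉ e i := by
  obtain ⟨s, rfl | rfl⟩ := Nat.even_or_odd' k
  · exact ⟨evenEdges s, by simpa [← mul_assoc] using evenEdges_subset s, card_evenEdges s,
      evenEdges_avoid s⟩
  · have hs : 0 < s := by omega
    exact ⟨oddEdges s, by simpa [mul_add, ← mul_assoc] using oddEdges_subset s,
      card_oddEdges hs, oddEdges_avoid hs⟩

theorem stmt_13 (k : ℕ) (hk : 2 ≤ k) :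
    ∃ (V : Finset ℕ) (E : Finset (Finset ℕ)),
      (∀ e ∈ E, e ⊆ V) ∧ (∀ e ∈ E, e.card = k) ∧
      (3 : ℚ) / (2 * k + 6) ≤ (tau E : ℚ) / (V.card + E.card) := by
  obtain ⟨e, hsub, hcard, havoid⟩ := exists_uniform_edges_avoiding_pairs hk
  refine ⟨range (2 * k), univ.image e, by simpa using hsub, by simpa using hcard, ?_⟩
  have hτ : 3 ≤ tau (univ.image e) := by
    refine three_le_tau ?_ (univ_nonempty.image e) (by simpa using havoid)
    simp only [mem_image, mem_univ, true_and, forall_exists_index, forall_apply_eq_imp_iff]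
    exact fun i => card_pos.1 (by rw [hcard i]; omega)
  have hm : ((univ.image e).card : ℚ) ≤ 6 := by exact_mod_cast card_image_le.trans_eq (by simp)
  rw [card_range, Nat.cast_mul, Nat.cast_ofNat]
  exact div_le_div₀ (by positivity) (by exact_mod_cast hτ) (by positivity) (by linarith)
end
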